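/- Let n ≥ 6 with n ≡ 1 (mod 3). If d ≥ 1 + 2n·(ln 2 + ln((n-1)/3)/3)/ln(9/8), then p_d(n)² < p_d(n-1)·p_d(n+1); that is, p_d is strictly log-convex at n. -/

import Mathlib

/-!
Write `D = d - 1`. Expanding each factor `(1 - q^j)^(-j^D)`, `p_d(k)` is a sum over the
partitions of `k` in which the part `j` occurring `m_j` times contributes
`∏ j, multichoose (j^D) m_j`. The partitions `3^a` and `2 3^a` show
`p_d(3a) ≥ multichoose (3^D) a ≥ 3^(aD) / a!` and `p_d(3a+2) ≥ 2^D · multichoose (3^D) a`.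
On the other hand `multichoose e m ≤ e^m`, so each of the at most `2^(n-1)` partitions of
`n = 3a + 1` contributes at most `(∏ parts)^D ≤ (4 · 3^(a-1))^D`. Altogether
`p_d(n)^2 / (p_d(n-1) p_d(n+1)) ≤ 4^(n-1) (a!)^2 (8/9)^D`, which the bound on `d` makes `< 1`
since `a! ≤ a^a`.
-/

open PowerSeries Finset

/-- `p : ℕ → ℚ` is the coefficient sequence of `∏_{n≥1} (1-q^n)^{-n^(d-1)}`. -/
def IsPdSeries (d : ℕ) (p : ℕ → ℚ) : Prop :=
  ∀ N k : ℕ, k ≤ N →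
    (PowerSeries.coeff k) ((PowerSeries.mk p) *
      ∏ n ∈ Finset.Icc 1 N, (1 - (PowerSeries.X : PowerSeries ℚ) ^ n) ^ (n ^ (d - 1))) =
    if k = 0 then 1 else 0

/-- The largest product of the parts of a partition of `n`: all parts are `3`, except for one
`2`, one `4`, or the single part `1`. -/
def maxPartProd : ℕ → ℕ
  | 0 => 1
  | 1 => 1
  | 2 => 2
  | 3 => 3
  | 4 => 4
  | m + 5 => 3 * maxPartProd (m + 2)

theorem maxPartProd_add_three {m : ℕ} (hm : 2 ≤ m) :
    maxPartProd (m + 3) = 3 * maxPartProd m := by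
  obtain ⟨k, rfl⟩ := Nat.exists_eq_add_of_le' hm
  rfl

theorem mul_maxPartProd_le (k m : ℕ) : k * maxPartProd m ≤ maxPartProd (m + k) := by
  induction h : k + m using Nat.strong_induction_on generalizing k m with
  | _ _ ih =>
    subst h
    by_cases hm : 5 ≤ m
    · obtain ⟨m, rfl⟩ := Nat.exists_eq_add_of_le' hm
      rw [show m + 5 + k = m + 2 + k + 3 by omega,
        maxPartProd_add_three (m := m + 2 + k) (by omega),
        maxPartProd_add_three (m := m + 2) (by omega), mul_left_comm]
      exact Nat.mul_le_mul_left 3 (ih _ (by omega) k (m + 2) rfl)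
    by_cases hk : 5 ≤ k
    · rw [show m + k = m + (k - 3) + 3 by omega, maxPartProd_add_three (by omega)]
      calc k * maxPartProd m ≤ 3 * ((k - 3) * maxPartProd m) := by
            rw [← mul_assoc]; exact Nat.mul_le_mul_right _ (by omega)
        _ ≤ 3 * maxPartProd (m + (k - 3)) :=
            Nat.mul_le_mul_left 3 (ih _ (by omega) (k - 3) m rfl)
    interval_cases m <;> interval_cases k <;> decide

theorem Multiset.prod_le_maxPartProd (s : Multiset ℕ) : s.prod ≤ maxPartProd s.sum := by
  induction s using Multiset.induction_on with
  | empty => decide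
  | cons a s ih =>
    rw [Multiset.prod_cons, Multiset.sum_cons, add_comm]
    exact (Nat.mul_le_mul_left a ih).trans (mul_maxPartProd_le a s.sum)

theorem maxPartProd_three_mul_add_four (b : ℕ) : maxPartProd (3 * b + 4) = 4 * 3 ^ b := by
  induction b with
  | zero => rfl
  | succ b ih =>
    rw [show 3 * (b + 1) + 4 = 3 * b + 4 + 3 by ring, maxPartProd_add_three (by omega), ih]
    ring

theorem three_mul_maxPartProd_three_mul_add_one_le (a : ℕ) :
    3 * maxPartProd (3 * a + 1) ≤ 4 * 3 ^ a := by
  rcases a with _ | b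
  · decide
  · rw [show 3 * (b + 1) + 1 = 3 * b + 4 by ring, maxPartProd_three_mul_add_four]
    exact (by ring : 3 * (4 * 3 ^ b) = 4 * 3 ^ (b + 1)).le

theorem Nat.Partition.card_le_two_pow (n : ℕ) : Fintype.card n.Partition ≤ 2 ^ (n - 1) :=
  composition_card n ▸ Fintype.card_le_of_surjective _ Nat.Partition.ofComposition_surj

/-- `l ∈ partitionAntidiag s n` encodes a partition of `n` into parts from `s`:
`l j` is the sum of its parts equal to `j`. -/
def partitionAntidiag (s : Finset ℕ) (n : ℕ) : Finset (ℕ →₀ ℕ) :=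
  (s.finsuppAntidiag n).filter fun l => ∀ j ∈ s, j ∣ l j

def partsOf (s : Finset ℕ) (l : ℕ →₀ ℕ) : Multiset ℕ :=
  ∑ j ∈ s, Multiset.replicate (l j / j) j

section partsOf

variable {s : Finset ℕ} {l : ℕ →₀ ℕ}

theorem count_partsOf (j : ℕ) : (partsOf s l).count j = if j ∈ s then l j / j else 0 := by
  simp [partsOf, Multiset.count_sum', Multiset.count_replicate]

theorem pos_of_mem_partsOf {i : ℕ} (hi : i ∈ partsOf s l) : 0 < i := by
  rw [← Multiset.count_pos, count_partsOf] at hi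
  split_ifs at hi
  · rcases i with _ | i
    · simp at hi
    · omega
  · omega

theorem prod_partsOf : (partsOf s l).prod = ∏ j ∈ s, j ^ (l j / j) := by
  simp [partsOf, Multiset.prod_sum, Multiset.prod_replicate]

theorem sum_partsOf {n : ℕ} (hl : l ∈ partitionAntidiag s n) : (partsOf s l).sum = n := by
  simp only [partitionAntidiag, mem_filter, mem_finsuppAntidiag] at hl
  obtain ⟨⟨rfl, -⟩, hdvd⟩ := hl
  simp only [partsOf, Multiset.sum_sum, Multiset.sum_replicate, smul_eq_mul]
  exact sum_congr rfl fun j hj => Nat.div_mul_cancel (hdvd j hj)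

end partsOf

theorem card_partitionAntidiag_le (s : Finset ℕ) (n : ℕ) :
    #(partitionAntidiag s n) ≤ 2 ^ (n - 1) := by
  refine le_trans ?_ (Nat.Partition.card_le_two_pow n)
  refine le_trans (card_le_card fun l hl => ?_)
    (card_image_le (s := univ) (f := Nat.Partition.toFinsuppAntidiag))
  let π : n.Partition := ⟨partsOf s l, pos_of_mem_partsOf, sum_partsOf hl⟩
  refine mem_image.mpr ⟨π, mem_univ _, ?_⟩
  simp only [partitionAntidiag, mem_filter, mem_finsuppAntidiag] at hl
  ext j
  simp only [Nat.Partition.toFinsuppAntidiag, Finsupp.coe_mk, π, count_partsOf]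
  split_ifs with hj
  · exact Nat.div_mul_cancel (hl.2 j hj)
  · exact (Finsupp.notMem_support_iff.mp fun h => hj (hl.1.2 h)).symm ▸ zero_mul j

theorem Nat.multichoose_le_pow : ∀ e g : ℕ, e.multichoose g ≤ e ^ g
  | _, 0 => by simp
  | 0, g + 1 => by simp
  | e + 1, g + 1 => by
    have h₁ := Nat.multichoose_le_pow e (g + 1)
    have h₂ := Nat.multichoose_le_pow (e + 1) g
    have h₃ : e ^ g ≤ (e + 1) ^ g := Nat.pow_le_pow_left (Nat.le_succ e) g
    rw [pow_succ] at h₁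
    rw [Nat.multichoose_succ_succ, pow_succ]
    nlinarith

theorem Nat.pow_le_factorial_mul_multichoose (e g : ℕ) : e ^ g ≤ g.factorial * e.multichoose g := by
  rw [Nat.multichoose_eq, ← Nat.ascFactorial_eq_factorial_mul_choose']
  exact Nat.pow_succ_le_ascFactorial e g

namespace PowerSeries

section CommRing

variable {R : Type*} [CommRing R]

theorem coeff_invOneSubPow_val (e m : ℕ) :
    coeff m (invOneSubPow R e).val = e.multichoose m := by
  rcases e with _ | e
  · rcases m with _ | m <;> simp [invOneSubPow_zero, coeff_one]
  · rw [invOneSubPow_val_succ_eq_mk_add_choose, coeff_mk, Nat.multichoose_eq,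
      show e + 1 + m - 1 = e + m by omega, Nat.choose_symm_add]

variable (R) in
noncomputable def invOneSubXPowPow (e j : ℕ) : R⟦X⟧ :=
  mk fun m => if j ∣ m then (e.multichoose (m / j) : R) else 0

theorem coeff_mul_invOneSubXPowPow {j : ℕ} (hj : j ≠ 0) (e m : ℕ) :
    coeff (j * m) (invOneSubXPowPow R e j) = e.multichoose m := by
  rw [invOneSubXPowPow, coeff_mk, if_pos (dvd_mul_right j m), Nat.mul_div_cancel_left m (by omega)]

theorem coeff_zero_invOneSubXPowPow (e j : ℕ) : coeff 0 (invOneSubXPowPow R e j) = 1 := by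
  simp [invOneSubXPowPow]

theorem invOneSubXPowPow_eq_expand {j : ℕ} (hj : j ≠ 0) (e : ℕ) :
    invOneSubXPowPow R e j = expand j hj (invOneSubPow R e).val := by
  ext m
  rw [invOneSubXPowPow, coeff_mk, coeff_expand, coeff_invOneSubPow_val]

theorem invOneSubXPowPow_mul {j : ℕ} (hj : j ≠ 0) (e : ℕ) :
    invOneSubXPowPow R e j * (1 - X ^ j) ^ e = 1 := by
  rw [invOneSubXPowPow_eq_expand hj, ← expand_X j hj, ← map_one (expand j hj), ← map_sub,
    ← map_pow, ← map_mul, ← invOneSubPow_inv_eq_one_sub_pow, (invOneSubPow R e).val_inv, map_one]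

theorem coeff_eq_of_coeff_mul_eq {A F G : R⟦X⟧} {N : ℕ} (hGF : G * F = 1)
    (h : ∀ k ≤ N, coeff k (A * F) = coeff k 1) {k : ℕ} (hk : k ≤ N) :
    coeff k A = coeff k G := by
  have hdvd : X ^ (N + 1) ∣ A * F - 1 :=
    X_pow_dvd_iff.mpr fun m hm => by rw [map_sub, h m (by omega), sub_self]
  have : A - G = (A * F - 1) * G := by linear_combination (-A) * hGF
  rw [← sub_eq_zero, ← map_sub, this]
  exact X_pow_dvd_iff.mp (dvd_mul_of_dvd_left hdvd G) k (by omega)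

end CommRing

variable {R : Type*} [CommRing R] [PartialOrder R] [IsOrderedRing R]

theorem coeff_invOneSubXPowPow_nonneg (e j m : ℕ) : 0 ≤ coeff m (invOneSubXPowPow R e j) := by
  rw [invOneSubXPowPow, coeff_mk]
  split_ifs <;> positivity

theorem prod_coeff_le_coeff_prod {s : Finset ℕ} {F : ℕ → R⟦X⟧}
    (hF : ∀ j ∈ s, ∀ m, 0 ≤ coeff m (F j)) (hF₀ : ∀ j ∈ s, coeff 0 (F j) = 1)
    {l : ℕ →₀ ℕ} (hl : l.support ⊆ s) :
    l.prod (fun j m => coeff m (F j)) ≤ coeff (l.sum fun _ m => m) (∏ j ∈ s, F j) := by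
  rw [coeff_prod, l.prod_of_support_subset hl _ hF₀]
  exact Finset.single_le_sum (fun l' _ => prod_nonneg fun j hj => hF j hj _)
    (mem_finsuppAntidiag'.mpr ⟨rfl, hl⟩)

end PowerSeries

theorem prod_coeff_invOneSubXPowPow_le {s : Finset ℕ} {n D : ℕ} {l : ℕ →₀ ℕ}
    (hl : l ∈ partitionAntidiag s n) :
    ∏ j ∈ s, coeff (l j) (invOneSubXPowPow ℚ (j ^ D) j) ≤ (maxPartProd n ^ D : ℕ) := by
  have hdvd := (mem_filter.mp hl).2
  calc ∏ j ∈ s, coeff (l j) (invOneSubXPowPow ℚ (j ^ D) j)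
      = ((∏ j ∈ s, (j ^ D).multichoose (l j / j) : ℕ) : ℚ) := by
        push_cast
        exact prod_congr rfl fun j hj => by rw [invOneSubXPowPow, coeff_mk, if_pos (hdvd j hj)]
    _ ≤ (maxPartProd n ^ D : ℕ) := by
        refine Nat.cast_le.mpr ?_
        calc ∏ j ∈ s, (j ^ D).multichoose (l j / j)
            ≤ ∏ j ∈ s, (j ^ D) ^ (l j / j) := prod_le_prod' fun j _ => Nat.multichoose_le_pow _ _
          _ = (partsOf s l).prod ^ D := by
            rw [prod_partsOf, ← prod_pow]
            exact prod_congr rfl fun j _ => by rw [← pow_mul, ← pow_mul, mul_comm]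
          _ ≤ maxPartProd n ^ D := by
            rw [← sum_partsOf hl]
            exact Nat.pow_le_pow_left (Multiset.prod_le_maxPartProd _) D

theorem coeff_prod_invOneSubXPowPow_le (s : Finset ℕ) (n D : ℕ) :
    coeff n (∏ j ∈ s, invOneSubXPowPow ℚ (j ^ D) j) ≤ 2 ^ (n - 1) * maxPartProd n ^ D := by
  have hvanish : ∀ l ∈ s.finsuppAntidiag n, l ∉ partitionAntidiag s n →
      ∏ j ∈ s, coeff (l j) (invOneSubXPowPow ℚ (j ^ D) j) = 0 := by
    intro l hl hl'
    obtain ⟨j, hj, hndvd⟩ : ∃ j ∈ s, ¬ j ∣ l j := by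
      simpa [partitionAntidiag, hl] using hl'
    exact prod_eq_zero hj (by rw [invOneSubXPowPow, coeff_mk, if_neg hndvd])
  rw [coeff_prod, ← sum_subset (filter_subset _ _) hvanish]
  calc _ ≤ #(partitionAntidiag s n) • ((maxPartProd n ^ D : ℕ) : ℚ) :=
        sum_le_card_nsmul _ _ _ fun l hl => prod_coeff_invOneSubXPowPow_le hl
    _ ≤ 2 ^ (n - 1) * maxPartProd n ^ D := by
        rw [nsmul_eq_mul]
        push_cast
        gcongr
        exact_mod_cast card_partitionAntidiag_le s n

namespace IsPdSeries

variable {d : ℕ} {p : ℕ → ℚ}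

theorem eq_coeff_prod (hp : IsPdSeries d p) {k N : ℕ} (hk : k ≤ N) :
    p k = coeff k (∏ j ∈ Icc 1 N, invOneSubXPowPow ℚ (j ^ (d - 1)) j) := by
  rw [← coeff_mk k p]
  refine coeff_eq_of_coeff_mul_eq ?_ (fun i hi => by rw [hp N i hi, coeff_one]) hk
  rw [← prod_mul_distrib]
  exact prod_eq_one fun j hj => invOneSubXPowPow_mul (by grind) _

theorem nonneg (hp : IsPdSeries d p) (k : ℕ) : 0 ≤ p k := by
  rw [hp.eq_coeff_prod le_rfl, coeff_prod]
  exact sum_nonneg fun l _ => prod_nonneg fun j _ => coeff_invOneSubXPowPow_nonneg _ _ _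

theorem le_two_pow_mul (hp : IsPdSeries d p) (n : ℕ) :
    p n ≤ 2 ^ (n - 1) * maxPartProd n ^ (d - 1) := by
  rw [hp.eq_coeff_prod le_rfl]
  exact coeff_prod_invOneSubXPowPow_le _ _ _

theorem prod_coeff_le (hp : IsPdSeries d p) {l : ℕ →₀ ℕ} {N : ℕ}
    (hl : l.support ⊆ Icc 1 N) (hN : (l.sum fun _ m => m) ≤ N) :
    l.prod (fun j m => coeff m (invOneSubXPowPow ℚ (j ^ (d - 1)) j)) ≤ p (l.sum fun _ m => m) := by
  rw [hp.eq_coeff_prod hN]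
  exact prod_coeff_le_coeff_prod (fun _ _ => coeff_invOneSubXPowPow_nonneg _ _)
    (fun _ _ => coeff_zero_invOneSubXPowPow _ _) hl

theorem multichoose_le (hp : IsPdSeries d p) {j : ℕ} (hj : j ≠ 0) (m : ℕ) :
    ((j ^ (d - 1)).multichoose m : ℚ) ≤ p (j * m) := by
  have := hp.prod_coeff_le (l := Finsupp.single j (j * m)) (N := j * m + j)
    (Finsupp.support_single_subset.trans (by simp; omega))
    (by rw [Finsupp.sum_single_index rfl]; omega)
  rwa [Finsupp.prod_single_index (coeff_zero_invOneSubXPowPow _ _), Finsupp.sum_single_index rfl,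
    coeff_mul_invOneSubXPowPow hj] at this

theorem multichoose_mul_multichoose_le (hp : IsPdSeries d p) {i j : ℕ} (hi : i ≠ 0)
    (hj : j ≠ 0) (hij : i ≠ j) (k m : ℕ) :
    ((i ^ (d - 1)).multichoose k * (j ^ (d - 1)).multichoose m : ℚ) ≤ p (i * k + j * m) := by
  let l := Finsupp.single i (i * k) + Finsupp.single j (j * m)
  have hdisj : Disjoint (Finsupp.single i (i * k)).support (Finsupp.single j (j * m)).support :=
    (disjoint_singleton.mpr hij).mono Finsupp.support_single_subset Finsupp.support_single_subset
  have hsum : (l.sum fun _ m => m) = i * k + j * m := by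
    rw [Finsupp.sum_add_index' (fun _ => rfl) (fun _ _ _ => rfl), Finsupp.sum_single_index rfl,
      Finsupp.sum_single_index rfl]
  have := hp.prod_coeff_le (l := l) (N := i * k + j * m + i + j)
    (Finsupp.support_add.trans (union_subset (Finsupp.support_single_subset.trans (by simp; omega))
      (Finsupp.support_single_subset.trans (by simp; omega)))) (by omega)
  rwa [hsum, Finsupp.prod_add_index_of_disjoint hdisj,
    Finsupp.prod_single_index (coeff_zero_invOneSubXPowPow _ _),
    Finsupp.prod_single_index (coeff_zero_invOneSubXPowPow _ _),
    coeff_mul_invOneSubXPowPow hi, coeff_mul_invOneSubXPowPow hj] at this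

end IsPdSeries

theorem four_pow_mul_factorial_sq_mul_eight_pow_lt {a d : ℕ}
    (hd : 1 + 2 * (3 * a + 1 : ℝ) * (Real.log 2 + Real.log a / 3) / Real.log (9 / 8) ≤ d) :
    4 ^ (3 * a) * a.factorial ^ 2 * 8 ^ (d - 1) < 9 ^ (d - 1) := by
  have h2 := Real.log_pos (by norm_num : (1 : ℝ) < 2)
  have ha := Real.log_natCast_nonneg a
  have h98 : 0 < Real.log (9 / 8) := Real.log_pos (by norm_num)
  have hd1 : 1 ≤ d := by
    have : 0 ≤ 2 * (3 * a + 1 : ℝ) * (Real.log 2 + Real.log a / 3) / Real.log (9 / 8) := by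
      positivity
    exact_mod_cast (le_add_of_nonneg_right this).trans hd
  have hD : 2 * (3 * a + 1 : ℝ) * (Real.log 2 + Real.log a / 3) ≤
      (d - 1 : ℕ) * (Real.log 9 - Real.log 8) := by
    rw [Nat.cast_sub hd1, Nat.cast_one, ← Real.log_div (by norm_num) (by norm_num),
      ← div_le_iff₀ h98]
    linarith
  have hfact : Real.log a.factorial ≤ a * Real.log a := by
    rw [← Real.log_pow]
    exact Real.log_le_log (by positivity) (by exact_mod_cast Nat.factorial_le_pow a)
  have hlog4 : Real.log 4 = 2 * Real.log 2 := by
    rw [show (4 : ℝ) = 2 ^ 2 by norm_num, Real.log_pow]; push_cast; ring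
  have hlog : Real.log ((4 : ℝ) ^ (3 * a) * a.factorial ^ 2 * 8 ^ (d - 1)) <
      Real.log (9 ^ (d - 1)) := by
    rw [Real.log_mul (by positivity) (by positivity), Real.log_mul (by positivity) (by positivity),
      Real.log_pow, Real.log_pow, Real.log_pow, Real.log_pow, hlog4]
    push_cast
    nlinarith
  exact_mod_cast (Real.log_lt_log_iff (by positivity) (by positivity)).mp hlog

theorem two_pow_mul_pow_sq_lt {a D M P : ℕ} (hM : 3 * M ≤ 4 * 3 ^ a)
    (hP : (3 ^ D) ^ a ≤ a.factorial * P) (h : 4 ^ (3 * a) * a.factorial ^ 2 * 8 ^ D < 9 ^ D) :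
    (2 ^ (3 * a) * M ^ D) ^ 2 < P * (2 ^ D * P) := by
  refine Nat.lt_of_mul_lt_mul_right (a := a.factorial ^ 2 * 9 ^ D) ?_
  have h4 : (2 : ℕ) ^ (3 * a) * 2 ^ (3 * a) = 4 ^ (3 * a) := by rw [← mul_pow]; norm_num
  have h16 : ((4 * 3 ^ a) ^ 2) ^ D = 8 ^ D * (2 ^ D * ((3 ^ D) ^ a) ^ 2) := by
    rw [mul_pow, mul_pow, show (4 : ℕ) ^ 2 = 8 * 2 by norm_num, mul_pow]
    ring
  calc (2 ^ (3 * a) * M ^ D) ^ 2 * (a.factorial ^ 2 * 9 ^ D)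
      = 4 ^ (3 * a) * a.factorial ^ 2 * ((3 * M) ^ 2) ^ D := by rw [← h4]; ring
    _ ≤ 4 ^ (3 * a) * a.factorial ^ 2 * ((4 * 3 ^ a) ^ 2) ^ D := by gcongr
    _ = 4 ^ (3 * a) * a.factorial ^ 2 * 8 ^ D * (2 ^ D * ((3 ^ D) ^ a) ^ 2) := by rw [h16]; ring
    _ < 9 ^ D * (2 ^ D * ((3 ^ D) ^ a) ^ 2) := by gcongr
    _ ≤ 9 ^ D * (2 ^ D * (a.factorial * P) ^ 2) := by gcongr
    _ = P * (2 ^ D * P) * (a.factorial ^ 2 * 9 ^ D) := by ring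

theorem pd_log_convex_mod_one_general (d : ℕ) (p : ℕ → ℚ) (hp : IsPdSeries d p)
    (n : ℕ) (h3 : n % 3 = 1)
    (hd : (d : ℝ) ≥ 1 + 2 * (n : ℝ) * (Real.log 2 + Real.log (((n : ℝ) - 1) / 3) / 3) / Real.log (9 / 8)) :
    p n ^ 2 < p (n - 1) * p (n + 1) := by
  obtain ⟨a, rfl⟩ : ∃ a, n = 3 * a + 1 := ⟨n / 3, by omega⟩
  have hd' : 1 + 2 * (3 * a + 1 : ℝ) * (Real.log 2 + Real.log a / 3) / Real.log (9 / 8) ≤ d := by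
    push_cast at hd
    rwa [show (3 * a + 1 - 1 : ℝ) / 3 = a by ring] at hd
  have hlow₁ := hp.multichoose_le three_ne_zero a
  have hlow₂ := hp.multichoose_mul_multichoose_le two_ne_zero three_ne_zero (by decide) 1 a
  rw [Nat.multichoose_one_right, show 2 * 1 + 3 * a = 3 * a + 1 + 1 by ring] at hlow₂
  have hcmp := two_pow_mul_pow_sq_lt (three_mul_maxPartProd_three_mul_add_one_le a)
    (Nat.pow_le_factorial_mul_multichoose _ a) (four_pow_mul_factorial_sq_mul_eight_pow_lt hd')
  calc p (3 * a + 1) ^ 2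
      ≤ ((2 ^ (3 * a) * maxPartProd (3 * a + 1) ^ (d - 1) : ℕ) : ℚ) ^ 2 := by
        exact_mod_cast pow_le_pow_left₀ (hp.nonneg _) (hp.le_two_pow_mul _) 2
    _ < ((3 ^ (d - 1)).multichoose a : ℚ) * (2 ^ (d - 1) * (3 ^ (d - 1)).multichoose a : ℕ) := by
        rw [← Nat.cast_pow, ← Nat.cast_mul]
        exact Nat.cast_lt.mpr hcmp
    _ ≤ p (3 * a + 1 - 1) * p (3 * a + 1 + 1) := by
        push_cast at hlow₂ ⊢
        exact mul_le_mul hlow₁ hlow₂ (by positivity) (hp.nonneg _)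

/-- Strict log-convexity of `p_d` at `n ≡ 1 (mod 3)`, `n ≥ 6`, for large `d`. -/
theorem pd_log_convex_mod_one (d : ℕ) (p : ℕ → ℚ) (hp : IsPdSeries d p)
    (n : ℕ) (hn : 6 ≤ n) (h3 : n % 3 = 1)
    (hd : (d : ℝ) ≥ 1 + 2 * (n : ℝ) * (Real.log 2 + Real.log (((n : ℝ) - 1) / 3) / 3) / Real.log (9 / 8)) :
    p n ^ 2 < p (n - 1) * p (n + 1) :=
  pd_log_convex_mod_one_general d p hp n h3 hd
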